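/- Let H be a Hopf algebra and let h ↦ i_h be an H-operation in a graded differential algebra Ω, with L_h = d i_h + i_h d + ε(h) Id_Ω. Then for each p ∈ ℕ, the set {ω ∈ Ω^p : i_h(ω) = 0 and i_h(dω) = 0 for all h ∈ H} equals Ω_B^p, the space of basic elements of degree p; consequently the term E_1^{p,0} of the spectral sequence of the canonical filtration F^p(Ω^n) = {ω ∈ Ω^n : i_{h_1}⋯i_{h_{n−p+1}}(ω) = 0 for all h_k ∈ H} equals Ω_B^p. -/

import Mathlib

/-! For a horizontal `ω` the Cartan formula reduces to `L_h ω = i_h (dω) + ε(h) ω`, so invariance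
of `ω` is the same as `i_h (dω) = 0`. On the diagonal `n = p` the canonical filtration asks for
the vanishing of a single contraction, so `F^p(Ωᵖ)` is just the horizontal part of `Ωᵖ`. -/

open scoped TensorProduct DirectSum

/-- A differential making an ℕ-graded algebra into a graded differential algebra:
`d` is homogeneous of degree `+1`, squares to zero, and is an antiderivation
(graded Leibniz rule). -/
structure IsGDA (K : Type) [Field K] (Ω : Type) [Ring Ω] [Algebra K Ω]
    (𝒜 : ℕ → Submodule K Ω) (d : Ω →ₗ[K] Ω) : Prop where
  d_mem : ∀ (n : ℕ), ∀ a ∈ 𝒜 n, d a ∈ 𝒜 (n + 1)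
  d_sq : ∀ a : Ω, d (d a) = 0
  leibniz : ∀ (n : ℕ) (a b : Ω), a ∈ 𝒜 n →
    d (a * b) = d a * b + ((-1 : K) ^ n) • (a * d b)

section HopfHelpers

variable (K : Type) [Field K] (H : Type) [Ring H] [Algebra K H]

/-- The right adjoint action associated to a coproduct `comul` and an antipode `anti`:
`adAct comul anti g` is the linear map `h ↦ ad(h)g = Σⱼ S(h⁽¹⁾ⱼ) g h⁽²⁾ⱼ`. -/
noncomputable def adAct (comul : H →ₗ[K] H ⊗[K] H) (anti : H →ₗ[K] H) (g : H) :
    H →ₗ[K] H :=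
  TensorProduct.lift (LinearMap.mk₂ K (fun x y => anti x * g * y)
    (fun x x' y => by simp [map_add, add_mul])
    (fun c x y => by simp [map_smul, smul_mul_assoc])
    (fun x y y' => by simp [mul_add])
    (fun c x y => by simp [mul_smul_comm])) ∘ₗ comul

variable (Ω : Type) [Ring Ω] [Algebra K Ω]

/-- `L_h := d ∘ i_h + i_h ∘ d + ε(h) Id`, as a linear map in `h`. -/
noncomputable def HLop (counit : H →ₗ[K] K) (d : Module.End K Ω)
    (i : H →ₗ[K] Module.End K Ω) : H →ₗ[K] Module.End K Ω :=
  LinearMap.mulLeft K d ∘ₗ i + LinearMap.mulRight K d ∘ₗ i +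
    LinearMap.toSpanSingleton K (Module.End K Ω) 1 ∘ₗ counit

/-- The Sweedler sum `h ↦ Σⱼ F(h⁽¹⁾ⱼ) ∘ G(h⁽²⁾ⱼ)` of two families of operators. -/
noncomputable def sweedlerEnd (comul : H →ₗ[K] H ⊗[K] H)
    (F G : H →ₗ[K] Module.End K Ω) : H →ₗ[K] Module.End K Ω :=
  TensorProduct.lift ((LinearMap.mul K (Module.End K Ω)).compl₁₂ F G) ∘ₗ comul

/-- The Sweedler sum `h ↦ Σⱼ F(h⁽¹⁾ⱼ)(α) * G(h⁽²⁾ⱼ)(β)` of values of two families of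
operators. -/
noncomputable def sweedlerPair (comul : H →ₗ[K] H ⊗[K] H)
    (F G : H →ₗ[K] Module.End K Ω) (α β : Ω) : H →ₗ[K] Ω :=
  TensorProduct.lift ((LinearMap.mul K Ω).compl₁₂ ((LinearMap.applyₗ α).comp F)
    ((LinearMap.applyₗ β).comp G)) ∘ₗ comul

/-- An operation of a Hopf algebra `H` (with coproduct `comul`, counit `counit` and
antipode `anti`) in a graded differential algebra `Ω`: a linear map `h ↦ i_h` into the
degree `-1` endomorphisms of `Ω` with `i_1 = 0`, satisfying, with
`L_h = d i_h + i_h d + ε(h) Id`: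
`i_h(αβ) = Σⱼ i_{h⁽¹⁾ⱼ}(α) L_{h⁽²⁾ⱼ}(β) + (-1)^a α i_h(β)` for `α` of degree `a`,
`i_g L_h = Σⱼ L_{h⁽¹⁾ⱼ} i_{ad(h⁽²⁾ⱼ)g}`, and `L_h L_g = L_{hg}`. -/
structure IsHopfOperation (comul : H →ₗ[K] H ⊗[K] H) (counit : H →ₗ[K] K)
    (anti : H →ₗ[K] H) (𝒜 : ℕ → Submodule K Ω) (d : Ω →ₗ[K] Ω)
    (i : H →ₗ[K] Module.End K Ω) : Prop where
  i_one : i 1 = 0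
  i_mem : ∀ (h : H) (n : ℕ), ∀ a ∈ 𝒜 (n + 1), i h a ∈ 𝒜 n
  i_deg0 : ∀ (h : H), ∀ a ∈ 𝒜 0, i h a = 0
  antider : ∀ (h : H) (n : ℕ) (α β : Ω), α ∈ 𝒜 n →
    i h (α * β) = sweedlerPair K H Ω comul i (HLop K H Ω counit d i) α β h
      + ((-1 : K) ^ n) • (α * i h β)
  i_L : ∀ g h : H, i g * HLop K H Ω counit d i h
      = sweedlerEnd K H Ω comul (HLop K H Ω counit d i) (i ∘ₗ adAct K H comul anti g) h
  L_mul : ∀ g h : H, HLop K H Ω counit d i h * HLop K H Ω counit d i g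
      = HLop K H Ω counit d i (h * g)

end HopfHelpers

section Stmt6

variable (K : Type) [Field K] (H : Type) [Ring H] [Algebra K H]
variable (Ω : Type) [Ring Ω] [Algebra K Ω]

/-- The canonical filtration of an `H`-operation:
`F^p(Ωⁿ) = {ω ∈ Ωⁿ | i_{h₁} ⋯ i_{h_{n-p+1}}(ω) = 0 for all h₁, …, h_{n-p+1} ∈ H}`
(for `n ≥ p`). -/
def Fset (𝒜 : ℕ → Submodule K Ω) (i : H →ₗ[K] Module.End K Ω) (p n : ℕ) : Set Ω :=
  {ω | ω ∈ 𝒜 n ∧ ∀ hs : Fin (n - p + 1) → H, (List.ofFn fun k => i (hs k)).prod ω = 0}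

/-- The set of basic elements of degree `p` of an `H`-operation: elements of `Ωᵖ` that
are horizontal (`i_h ω = 0` for all `h`) and invariant (`L_h ω = ε(h) • ω` for all
`h`). -/
def basicSet (counit : H →ₗ[K] K) (𝒜 : ℕ → Submodule K Ω) (d : Ω →ₗ[K] Ω)
    (i : H →ₗ[K] Module.End K Ω) (p : ℕ) : Set Ω :=
  {ω | ω ∈ 𝒜 p ∧ (∀ h : H, i h ω = 0) ∧
    (∀ h : H, HLop K H Ω counit d i h ω = counit h • ω)}

end Stmt6

section

variable {K : Type} [Field K] {H : Type} [Ring H] [Algebra K H] {Ω : Type} [Ring Ω] [Algebra K Ω]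

theorem HLop_apply (counit : H →ₗ[K] K) (d : Module.End K Ω) (i : H →ₗ[K] Module.End K Ω)
    (h : H) (ω : Ω) :
    HLop K H Ω counit d i h ω = d (i h ω) + i h (d ω) + counit h • ω := by
  simp [HLop, Module.End.mul_apply, LinearMap.toSpanSingleton_apply]

theorem basicSet_eq (counit : H →ₗ[K] K) (𝒜 : ℕ → Submodule K Ω) (d : Ω →ₗ[K] Ω)
    (i : H →ₗ[K] Module.End K Ω) (p : ℕ) :
    basicSet K H Ω counit 𝒜 d i p = {ω | ω ∈ 𝒜 p ∧ ∀ h : H, i h ω = 0 ∧ i h (d ω) = 0} := by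
  ext ω
  simp only [basicSet, Set.mem_ofPred_eq, HLop_apply, and_congr_right_iff]
  intro _
  constructor
  · rintro ⟨horizontal, invariant⟩ h
    have := invariant h
    rw [horizontal h, map_zero, zero_add] at this
    exact ⟨horizontal h, add_eq_right.mp this⟩
  · intro h_zero
    exact ⟨fun h => (h_zero h).1, fun h => by simp [(h_zero h).1, (h_zero h).2]⟩

theorem Fset_self (𝒜 : ℕ → Submodule K Ω) (i : H →ₗ[K] Module.End K Ω) (p : ℕ) :
    Fset K H Ω 𝒜 i p p = {ω | ω ∈ 𝒜 p ∧ ∀ h : H, i h ω = 0} := by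
  ext ω
  simp only [Fset, Set.mem_ofPred_eq, Nat.sub_self, zero_add, List.ofFn_succ, List.ofFn_zero,
    List.prod_cons, List.prod_nil, mul_one]
  exact and_congr_right fun _ => ⟨fun hall h => hall fun _ => h, fun hall hs => hall (hs 0)⟩

end

theorem stmt6_general (K : Type) [Field K] (H : Type) [Ring H] [HopfAlgebra K H]
    (Ω : Type) [Ring Ω] [Algebra K Ω] (𝒜 : ℕ → Submodule K Ω)
    (d : Ω →ₗ[K] Ω) (hΩ : IsGDA K Ω 𝒜 d)
    (i : H →ₗ[K] Module.End K Ω)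
    (p : ℕ) :
    {ω : Ω | ω ∈ 𝒜 p ∧ ∀ h : H, i h ω = 0 ∧ i h (d ω) = 0}
        = basicSet K H Ω (Coalgebra.counit (R := K) (A := H)) 𝒜 d i p ∧
    {ω : Ω | ω ∈ Fset K H Ω 𝒜 i p p ∧ d ω ∈ Fset K H Ω 𝒜 i (p + 1) (p + 1)}
        = basicSet K H Ω (Coalgebra.counit (R := K) (A := H)) 𝒜 d i p := by
  rw [basicSet_eq, Fset_self, Fset_self]
  refine ⟨rfl, Set.ext fun ω => ?_⟩
  simp only [Set.mem_ofPred_eq]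
  constructor
  · rintro ⟨⟨hω, horizontal⟩, -, d_horizontal⟩
    exact ⟨hω, fun h => ⟨horizontal h, d_horizontal h⟩⟩
  · rintro ⟨hω, h_zero⟩
    exact ⟨⟨hω, fun h => (h_zero h).1⟩, hΩ.d_mem p ω hω, fun h => (h_zero h).2⟩

/-- Let `H` be a Hopf algebra and `h ↦ i_h` an `H`-operation in a
graded differential algebra `Ω`, with `L_h = d i_h + i_h d + ε(h) Id`.  Then for each
`p ∈ ℕ` the set `{ω ∈ Ωᵖ | i_h(ω) = 0 and i_h(dω) = 0 for all h ∈ H}` equals the space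
`Ω_B^p` of basic elements of degree `p`; consequently the term
`E₁^{p,0} = {ω ∈ F^p(Ωᵖ) | dω ∈ F^{p+1}(Ω^{p+1})}` of the spectral sequence of the
canonical filtration also equals `Ω_B^p`. -/
theorem stmt6 (K : Type) [Field K] (H : Type) [Ring H] [HopfAlgebra K H]
    (Ω : Type) [Ring Ω] [Algebra K Ω] (𝒜 : ℕ → Submodule K Ω) [GradedAlgebra 𝒜]
    (d : Ω →ₗ[K] Ω) (hΩ : IsGDA K Ω 𝒜 d)
    (i : H →ₗ[K] Module.End K Ω)
    (hop : IsHopfOperation K H Ω (Coalgebra.comul (R := K) (A := H)) (Coalgebra.counit (R := K) (A := H))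
      (HopfAlgebra.antipode K : H →ₗ[K] H) 𝒜 d i)
    (p : ℕ) :
    {ω : Ω | ω ∈ 𝒜 p ∧ ∀ h : H, i h ω = 0 ∧ i h (d ω) = 0}
        = basicSet K H Ω (Coalgebra.counit (R := K) (A := H)) 𝒜 d i p ∧
    {ω : Ω | ω ∈ Fset K H Ω 𝒜 i p p ∧ d ω ∈ Fset K H Ω 𝒜 i (p + 1) (p + 1)}
        = basicSet K H Ω (Coalgebra.counit (R := K) (A := H)) 𝒜 d i p :=
  stmt6_general K H Ω 𝒜 d hΩ i p
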